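/- arXiv:2503.12792 — 3 statements merged into one kernel-verified Lean document; each statement's English description precedes it below -/
import Mathlib

section
/- Inheritance of strong symmetry: let ρ = ∑_{i=1}^n p_i ρ_i where each p_i > 0, each ρ_i is positive semidefinite, and U is a unitary with U ρ = λ ρ for some unit-modulus scalar λ. Then U ρ_i = λ ρ_i for every i. -/
/-!
The range of each `ρ i` lies in the range of `ρ`: for positive semidefinite summands with positive
weights, `ρ v = 0` forces `⟪v, ρ i v⟫ = 0` for every `i`, hence `ρ i v = 0`, so `ker ρ ⊆ ker ρ i`, and
for Hermitian matrices that is the inclusion of ranges. The symmetry `U ρ = λ ρ` says that `U` acts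
as `λ` on the range of `ρ`, so in particular `U ρ i = λ ρ i`.
-/

open scoped ComplexOrder
open Matrix

namespace Matrix

variable {n : Type*} [Fintype n]

theorem PosSemidef.mulVec_eq_zero_of_add_mulVec_eq_zero {𝕜 : Type*} [RCLike 𝕜]
    {A B : Matrix n n 𝕜} (hA : A.PosSemidef) (hB : B.PosSemidef) {v : n → 𝕜}
    (h : (A + B) *ᵥ v = 0) : A *ᵥ v = 0 := by
  have hsum : star v ⬝ᵥ A *ᵥ v + star v ⬝ᵥ B *ᵥ v = 0 := by
    rw [← dotProduct_add, ← add_mulVec, h, dotProduct_zero]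
  have hA0 := ((add_eq_zero_iff_of_nonneg (hA.dotProduct_mulVec_nonneg v)
    (hB.dotProduct_mulVec_nonneg v)).mp hsum).1
  exact (hA.dotProduct_mulVec_zero_iff v).mp hA0

theorem PosSemidef.mulVec_eq_zero_of_sum_smul_mulVec_eq_zero {𝕜 ι : Type*} [RCLike 𝕜]
    [Fintype ι] {ρ : ι → Matrix n n 𝕜} (hρ : ∀ i, (ρ i).PosSemidef)
    {p : ι → ℝ} (hp : ∀ i, 0 ≤ p i) {j : ι} (hpj : p j ≠ 0) {v : n → 𝕜}
    (h : (∑ i, p i • ρ i) *ᵥ v = 0) : ρ j *ᵥ v = 0 := by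
  classical
  rw [← Finset.add_sum_erase _ _ (Finset.mem_univ j)] at h
  have hj : (p j • ρ j) *ᵥ v = 0 :=
    ((hρ j).smul (hp j)).mulVec_eq_zero_of_add_mulVec_eq_zero
      (posSemidef_sum _ fun i _ => (hρ i).smul (hp i)) h
  rw [smul_mulVec, smul_eq_zero] at hj
  exact hj.resolve_left hpj

theorem mul_eq_smul_of_ker_le {R : Type*} [CommRing R] {A B M : Matrix n n R} {c : R}
    (hker : ∀ v, A *ᵥ v = 0 → B *ᵥ v = 0) (h : A * M = c • A) : B * M = c • B := by
  refine ext_iff_mulVec.mpr fun v => ?_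
  have hAv : A *ᵥ (M *ᵥ v - c • v) = 0 := by
    rw [mulVec_sub, mulVec_mulVec, h, mulVec_smul, smul_mulVec, sub_self]
  rw [← sub_eq_zero, smul_mulVec, ← mulVec_mulVec, ← mulVec_smul, ← mulVec_sub]
  exact hker _ hAv

theorem IsHermitian.mul_eq_smul_of_ker_le {R : Type*} [CommRing R] [StarRing R]
    {A B U : Matrix n n R} (hA : A.IsHermitian) (hB : B.IsHermitian) {c : R}
    (hker : ∀ v, A *ᵥ v = 0 → B *ᵥ v = 0) (h : U * A = c • A) : U * B = c • B := by
  have hA' : A * Uᴴ = star c • A := by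
    simpa only [conjTranspose_mul, conjTranspose_smul, hA.eq] using
      congrArg Matrix.conjTranspose h
  simpa only [conjTranspose_mul, conjTranspose_smul, conjTranspose_conjTranspose, hB.eq,
    star_star] using congrArg Matrix.conjTranspose (Matrix.mul_eq_smul_of_ker_le hker hA')

end Matrix

theorem strong_symmetry_inheritance_general {n : Type*} [Fintype n] {m : ℕ}
    (p : Fin m → ℝ) (hp : ∀ i, 0 < p i)
    (ρi : Fin m → Matrix n n ℂ) (hρi : ∀ i, (ρi i).PosSemidef)
    (U : Matrix n n ℂ)
    (lam : ℂ)
    (hsym : U * (∑ i, p i • ρi i) = lam • ∑ i, p i • ρi i) :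
    ∀ i, U * ρi i = lam • ρi i := by
  intro j
  have hρ : (∑ i, p i • ρi i).PosSemidef :=
    posSemidef_sum _ fun i _ => (hρi i).smul (hp i).le
  exact hρ.isHermitian.mul_eq_smul_of_ker_le (hρi j).isHermitian
    (fun _ => PosSemidef.mulVec_eq_zero_of_sum_smul_mulVec_eq_zero hρi (fun i => (hp i).le)
      (hp j).ne') hsym

/-- Inheritance of strong symmetry by members of an ensemble. -/
theorem strong_symmetry_inheritance {n : Type*} [Fintype n] [DecidableEq n] {m : ℕ}
    (p : Fin m → ℝ) (hp : ∀ i, 0 < p i)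
    (ρi : Fin m → Matrix n n ℂ) (hρi : ∀ i, (ρi i).PosSemidef)
    (U : Matrix n n ℂ) (hU : U ∈ Matrix.unitaryGroup n ℂ)
    (lam : ℂ) (hlam : ‖lam‖ = 1)
    (hsym : U * (∑ i, p i • ρi i) = lam • ∑ i, p i • ρi i) :
    ∀ i, U * ρi i = lam • ρi i :=
  strong_symmetry_inheritance_general p hp ρi hρi U lam hsym
end

section
/- Inheritance of strong symmetry under extensions: let ρ̃ be a positive semidefinite operator on H ⊗ H' whose partial trace over H' equals ρ, and let g be a unitary on H with g ρ = λ ρ for unit-modulus λ. Then (g ⊗ 1_{H'}) ρ̃ = λ ρ̃. -/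
open scoped ComplexOrder
open Kronecker

/-! With `U = g ⊗ 1` unitary and `D = U - λ`, the trace of `D ρ̃ Dᴴ` equals
`2 Tr ρ̃ - 2 Re (conj λ · Tr (U ρ̃))`, and `Tr (U ρ̃) = Tr (g ρ) = λ Tr ρ = λ Tr ρ̃`, so it vanishes.
Writing `ρ̃ = Bᴴ B`, this trace is the squared Frobenius norm of `D Bᴴ`, so `D Bᴴ = 0` and
hence `D ρ̃ = 0`. -/

noncomputable def ptraceRight {m m' : Type*} [Fintype m'] (ρ : Matrix (m × m') (m × m') ℂ) :
    Matrix m m ℂ :=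
  Matrix.of fun a b => ∑ x : m', ρ (a, x) (b, x)

namespace Matrix

variable {𝕜 m n : Type*} [RCLike 𝕜] [Fintype m] [Fintype n]

open scoped MatrixOrder in
theorem PosSemidef.mul_eq_zero_of_trace_mul_mul_conjTranspose_eq_zero {A : Matrix n n 𝕜}
    (hA : A.PosSemidef) {D : Matrix m n 𝕜} (h : (D * A * Dᴴ).trace = 0) : D * A = 0 := by
  classical
  obtain ⟨B, rfl⟩ := CStarAlgebra.nonneg_iff_eq_star_mul_self.mp hA.nonneg
  have hDB : D * Bᴴ = 0 := by
    rw [← trace_mul_conjTranspose_self_eq_zero_iff, conjTranspose_mul, conjTranspose_conjTranspose]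
    simpa only [star_eq_conjTranspose, Matrix.mul_assoc] using h
  rwa [star_eq_conjTranspose, mul_conjTranspose_mul_self_eq_zero]

theorem PosSemidef.mul_eq_smul_of_trace_mul_eq [DecidableEq n] {A U : Matrix n n 𝕜}
    (hA : A.PosSemidef) (hU : U ∈ unitaryGroup n 𝕜) {c : 𝕜} (hc : ‖c‖ = 1)
    (h : (U * A).trace = c * A.trace) : U * A = c • A := by
  set D := U - c • 1
  have hcc : c * star c = 1 := by
    rw [RCLike.star_def, RCLike.mul_conj, hc]; norm_num
  have hAU : (A * Uᴴ).trace = star c * A.trace := by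
    rw [← hA.isHermitian.eq, ← conjTranspose_mul, trace_conjTranspose, h, star_mul',
      ← trace_conjTranspose, hA.isHermitian.eq]
  have hUAU : (U * A * Uᴴ).trace = A.trace := by
    rw [trace_mul_comm, ← Matrix.mul_assoc, ← star_eq_conjTranspose,
      Unitary.star_mul_self_of_mem hU, Matrix.one_mul]
  have hD : (D * A * Dᴴ).trace = 0 := by
    simp only [D, conjTranspose_sub, conjTranspose_smul, conjTranspose_one, sub_mul, mul_sub,
      Matrix.smul_mul, Matrix.mul_smul, Matrix.one_mul, Matrix.mul_one, smul_smul, trace_sub,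
      trace_smul, smul_eq_mul, hUAU, hAU, h]
    linear_combination (-A.trace) * hcc
  have hDA := hA.mul_eq_zero_of_trace_mul_mul_conjTranspose_eq_zero hD
  rwa [Matrix.sub_mul, Matrix.smul_mul, Matrix.one_mul, sub_eq_zero] at hDA

end Matrix

theorem trace_kronecker_one_mul {m m' : Type*} [Fintype m] [Fintype m'] [DecidableEq m']
    (g : Matrix m m ℂ) (ρt : Matrix (m × m') (m × m') ℂ) :
    ((g ⊗ₖ (1 : Matrix m' m' ℂ)) * ρt).trace = (g * ptraceRight ρt).trace := by
  simp only [Matrix.trace, Matrix.diag_apply, Matrix.mul_apply, ptraceRight, Matrix.of_apply,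
    Matrix.kroneckerMap_apply, Matrix.one_apply, mul_ite, mul_one, mul_zero, ite_mul, zero_mul,
    Fintype.sum_prod_type, Finset.sum_ite_eq, Finset.mem_univ, if_true, Finset.mul_sum]
  exact Finset.sum_congr rfl fun a _ => Finset.sum_comm

theorem trace_ptraceRight {m m' : Type*} [Fintype m] [Fintype m']
    (ρt : Matrix (m × m') (m × m') ℂ) : (ptraceRight ρt).trace = ρt.trace := by
  simp only [Matrix.trace, Matrix.diag_apply, ptraceRight, Matrix.of_apply, Fintype.sum_prod_type]

/-- extensions inherit strong symmetries. -/
theorem strong_symmetry_extension {m m' : Type*} [Fintype m] [DecidableEq m]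
    [Fintype m'] [DecidableEq m']
    (ρt : Matrix (m × m') (m × m') ℂ) (hρt : ρt.PosSemidef)
    (ρ : Matrix m m ℂ) (hpt : ptraceRight ρt = ρ)
    (g : Matrix m m ℂ) (hg : g ∈ Matrix.unitaryGroup m ℂ)
    (lam : ℂ) (hlam : ‖lam‖ = 1) (hsym : g * ρ = lam • ρ) :
    (g ⊗ₖ (1 : Matrix m' m' ℂ)) * ρt = lam • ρt := by
  subst hpt
  refine hρt.mul_eq_smul_of_trace_mul_eq (Matrix.kronecker_mem_unitary hg (one_mem _)) hlam ?_
  rw [trace_kronecker_one_mul, hsym, Matrix.trace_smul, trace_ptraceRight, smul_eq_mul]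
end

section
/- For a fixed unitary U on H_Q ⊗ H_A and fixed density matrix ρ on H_Q, the map g ↦ U† (g ⊗ 1_A) U is an injective group homomorphism from the unitary group of H_Q into the unitary group of H_Q ⊗ H_A, and it maps the strong symmetry group of E(ρ) (unitaries g with g E(ρ) a unit scalar times E(ρ)) into the strong symmetry group of ρ ⊗ |0⟩⟨0|_A, preserving the scalar (charge). -/
open scoped ComplexOrder
open Kronecker Matrix

/-- The outer product |v⟩⟨v|. -/
noncomputable def outer {n : Type*} (v : n → ℂ) : Matrix n n ℂ :=
  Matrix.vecMulVec v (star v)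


/-! The map is `g ↦ g ⊗ 1` followed by conjugation by `U`; it is injective because the ancilla
index type is nonempty (`v` is a unit vector).

For the charge, put `τ = U (ρ ⊗ |v⟩⟨v|) U†`, which is positive. Since `tr((g ⊗ 1) τ) = tr(g E(ρ))`,
the hypothesis gives `tr((g ⊗ 1) τ) = λ tr τ`. For a unitary `W` and `τ = B†B`, this forces
`W τ = λ τ`: the Frobenius norm `‖W B† - λ B†‖² = 2 tr τ - 2 Re(λ̄ tr(W τ))` vanishes
(the equality case of Cauchy–Schwarz). Conjugating back by `U` gives the claim. -/

namespace Matrix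

variable {m n : Type*} [Fintype m] [Fintype n]

theorem trace_ptraceRight (M : Matrix (m × n) (m × n) ℂ) : (ptraceRight M).trace = M.trace := by
  simp [ptraceRight, trace, Fintype.sum_prod_type]

theorem trace_kronecker_one_mul [DecidableEq n] (A : Matrix m m ℂ) (M : Matrix (m × n) (m × n) ℂ) :
    ((A ⊗ₖ (1 : Matrix n n ℂ)) * M).trace = (A * ptraceRight M).trace := by
  simp only [trace, diag, mul_apply, ptraceRight, of_apply, Fintype.sum_prod_type,
    kroneckerMap_apply, one_apply, mul_ite, mul_one, mul_zero, ite_mul, zero_mul,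
    Finset.sum_ite_eq, Finset.mem_univ, if_true, Finset.mul_sum]
  exact Finset.sum_congr rfl fun _ _ => Finset.sum_comm

open scoped MatrixOrder in
theorem PosSemidef.mul_eq_smul_of_trace_mul_eq_s5 [DecidableEq n] {W τ : Matrix n n ℂ} {c : ℂ}
    (hτ : τ.PosSemidef) (hW : W ∈ unitaryGroup n ℂ) (hc : ‖c‖ = 1)
    (h : (W * τ).trace = c * τ.trace) : W * τ = c • τ := by
  obtain ⟨B, rfl⟩ := CStarAlgebra.nonneg_iff_eq_star_mul_self.mp hτ.nonneg
  rw [star_eq_conjTranspose] at h ⊢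
  have hWW : Wᴴ * W = 1 := mem_unitaryGroup_iff'.mp hW
  have hcc : star c * c = 1 := by
    rw [RCLike.star_def, ← Complex.normSq_eq_conj_mul_self, Complex.normSq_eq_norm_sq, hc]
    norm_num
  have hreal : star (Bᴴ * B).trace = (Bᴴ * B).trace := by
    rw [← trace_conjTranspose, conjTranspose_mul, conjTranspose_conjTranspose]
  have hBWB : (B * W * Bᴴ).trace = c * (Bᴴ * B).trace := by
    rw [trace_mul_cycle, trace_mul_comm, h]
  have hBWB' : (B * Wᴴ * Bᴴ).trace = star c * (Bᴴ * B).trace := by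
    have : B * Wᴴ * Bᴴ = (B * W * Bᴴ)ᴴ := by
      simp only [conjTranspose_mul, conjTranspose_conjTranspose, mul_assoc]
    rw [this, trace_conjTranspose, hBWB, star_mul', hreal]
  suffices hX : W * Bᴴ - c • Bᴴ = 0 by
    rw [← mul_assoc, sub_eq_zero.mp hX, smul_mul_assoc]
  rw [← trace_conjTranspose_mul_self_eq_zero_iff]
  calc ((W * Bᴴ - c • Bᴴ)ᴴ * (W * Bᴴ - c • Bᴴ)).trace
      = (B * (Wᴴ * W) * Bᴴ).trace - c * (B * Wᴴ * Bᴴ).trace - star c * (B * W * Bᴴ).trace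
          + star c * c * (B * Bᴴ).trace := by
        simp only [conjTranspose_sub, conjTranspose_mul, conjTranspose_smul,
          conjTranspose_conjTranspose, sub_mul, mul_sub, smul_mul_assoc, mul_smul_comm,
          trace_sub, trace_smul, smul_eq_mul, mul_assoc]
        ring
    _ = 0 := by
        rw [hWW, mul_one, hBWB, hBWB', trace_mul_comm B]
        linear_combination (-(Bᴴ * B).trace) * hcc

theorem PosSemidef.kronecker_one_mul_eq_smul_of_mul_ptraceRight_eq [DecidableEq m] [DecidableEq n]
    {τ : Matrix (m × n) (m × n) ℂ} {g : Matrix m m ℂ} {c : ℂ} (hτ : τ.PosSemidef)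
    (hg : g ∈ unitaryGroup m ℂ) (hc : ‖c‖ = 1) (h : g * ptraceRight τ = c • ptraceRight τ) :
    (g ⊗ₖ (1 : Matrix n n ℂ)) * τ = c • τ :=
  hτ.mul_eq_smul_of_trace_mul_eq_s5 (kronecker_mem_unitary hg (one_mem _)) hc <| by
    rw [trace_kronecker_one_mul, h, trace_smul, trace_ptraceRight, smul_eq_mul]

variable (m n) in
def kroneckerOneHom [DecidableEq m] [DecidableEq n] :
    unitaryGroup m ℂ →* unitaryGroup (m × n) ℂ where
  toFun g := ⟨g ⊗ₖ (1 : Matrix n n ℂ), kronecker_mem_unitary g.2 (one_mem _)⟩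
  map_one' := Subtype.ext one_kronecker_one
  map_mul' g h := Subtype.ext <| by
    simp only [UnitaryGroup.mul_val, ← mul_kronecker_mul, mul_one]

@[simp]
theorem coe_kroneckerOneHom [DecidableEq m] [DecidableEq n] (g : unitaryGroup m ℂ) :
    (kroneckerOneHom m n g : Matrix (m × n) (m × n) ℂ) = g ⊗ₖ (1 : Matrix n n ℂ) :=
  rfl

theorem kroneckerOneHom_injective [DecidableEq m] [DecidableEq n] [Nonempty n] :
    Function.Injective (kroneckerOneHom m n) := by
  intro g h hgh
  obtain ⟨x⟩ := ‹Nonempty n›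
  ext i j
  simpa using congr_fun₂ (congr_arg Subtype.val hgh) (i, x) (j, x)

end Matrix

theorem Unitary.star_mul_mul_mul_eq_smul {A K : Type*} [Monoid A] [StarMul A] [SMul K A]
    [IsScalarTower K A A] [SMulCommClass K A A] {u w σ : A} {c : K} (hu : u ∈ unitary A)
    (h : w * (u * σ * star u) = c • (u * σ * star u)) : star u * w * u * σ = c • σ := by
  have hu₁ : star u * u = 1 := Unitary.star_mul_self_of_mem hu
  calc star u * w * u * σ = star u * (w * (u * σ * star u)) * u := by
        simp only [mul_assoc, hu₁, mul_one]
    _ = c • (star u * u * σ * (star u * u)) := by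
        rw [h, mul_smul_comm, smul_mul_assoc]
        simp only [mul_assoc]
    _ = c • σ := by rw [hu₁, one_mul, mul_one]

/-- g ↦ U† (g ⊗ 1) U is an injective group homomorphism of unitary groups
which maps the strong symmetry group of E(ρ) into that of ρ ⊗ |0⟩⟨0|, preserving the charge. -/
theorem symmetry_pullback_hom {nQ nA : Type*} [Fintype nQ] [DecidableEq nQ]
    [Fintype nA] [DecidableEq nA]
    (U : Matrix (nQ × nA) (nQ × nA) ℂ) (hU : U ∈ Matrix.unitaryGroup (nQ × nA) ℂ)
    (v : nA → ℂ) (hv : star v ⬝ᵥ v = 1)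
    (ρ : Matrix nQ nQ ℂ) (hρ : ρ.PosSemidef ∧ ρ.trace = 1) :
    ∃ φ : Matrix.unitaryGroup nQ ℂ →* Matrix.unitaryGroup (nQ × nA) ℂ,
      (∀ g : Matrix.unitaryGroup nQ ℂ,
        (φ g : Matrix (nQ × nA) (nQ × nA) ℂ)
          = Uᴴ * ((g : Matrix nQ nQ ℂ) ⊗ₖ (1 : Matrix nA nA ℂ)) * U) ∧
      Function.Injective φ ∧
      (∀ (g : Matrix.unitaryGroup nQ ℂ) (lam : ℂ), ‖lam‖ = 1 →
        (g : Matrix nQ nQ ℂ) * ptraceRight (U * (ρ ⊗ₖ outer v) * Uᴴ)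
            = lam • ptraceRight (U * (ρ ⊗ₖ outer v) * Uᴴ) →
        (φ g : Matrix (nQ × nA) (nQ × nA) ℂ) * (ρ ⊗ₖ outer v)
            = lam • (ρ ⊗ₖ outer v)) := by
  have : Nonempty nA := by
    by_contra hempty
    simp [not_nonempty_iff.mp hempty] at hv
  let u : unitaryGroup (nQ × nA) ℂ := ⟨U, hU⟩
  refine ⟨(MulAut.conj u).symm.toMonoidHom.comp (kroneckerOneHom nQ nA), fun g => rfl,
    (MulAut.conj u).symm.injective.comp kroneckerOneHom_injective, fun g c hc h => ?_⟩
  have hσ : (ρ ⊗ₖ outer v).PosSemidef := hρ.1.kronecker (posSemidef_vecMulVec_self_star v)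
  exact Unitary.star_mul_mul_mul_eq_smul hU <|
    (hσ.mul_mul_conjTranspose_same U).kronecker_one_mul_eq_smul_of_mul_ptraceRight_eq g.2 hc h
end
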